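/- For any distinct t_1, …, t_n ∈ T, the distribution function H of (ζ_Z(t_1), …, ζ_Z(t_n)) satisfies the inf-argmax representation: for every x = (x_1, …, x_n) ∈ ℝ^n, −ln H(x) = Σ_{k=1}^n e^{−x_k} · P( inf argmax_{1≤i≤n}( Θ_{t_k}(t_i) − x_i ) = k ), where inf argmax denotes the smallest index attaining the maximum. -/

import Mathlib

open MeasureTheory ProbabilityTheory Filter
open scoped ENNReal NNReal

noncomputable section

/-- `e^x` for `x ∈ [-∞,∞]`, as an extended nonnegative real. -/
def expE (x : EReal) : ℝ≥0∞ :=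
  if x = ⊤ then ⊤ else if x = ⊥ then 0 else ENNReal.ofReal (Real.exp x.toReal)

/-- `e^{-L}` for `L ∈ [0,∞]`. -/
def expNeg (L : ℝ≥0∞) : ℝ≥0∞ :=
  if L = ⊤ then 0 else ENNReal.ofReal (Real.exp (-L.toReal))

/-- natural logarithm, from `[0,∞]` to `[-∞,∞]`. -/
def logE (L : ℝ≥0∞) : EReal :=
  if L = 0 then ⊥ else if L = ⊤ then ⊤ else ((Real.log L.toReal : ℝ) : EReal)

/-- Equality of all finite-dimensional distributions of two processes. -/
def SameFDD {T E Ω₁ Ω₂ : Type*} [MeasurableSpace Ω₁] [MeasurableSpace Ω₂] [MeasurableSpace E]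
    (μ₁ : Measure Ω₁) (X : T → Ω₁ → E) (μ₂ : Measure Ω₂) (Y : T → Ω₂ → E) : Prop :=
  ∀ (n : ℕ) (t : Fin n → T),
    Measure.map (fun ω i => X (t i) ω) μ₁ = Measure.map (fun ω i => Y (t i) ω) μ₂

/-- `ζ` is (a version of) the max-stable process associated with the spectral process `Z`,
i.e. its finite-dimensional distributions are the ones of the de Haan representation
`ζ_Z(t) = max_{i ≥ 1} (P_i + Z_i(t))` built from a Poisson point process `Σ ε_{P_i}` on `ℝ`
with intensity `e^{-x} dx`, independent of the i.i.d. copies `Z_i` of `Z`; equivalently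
`P(ζ(t₁) ≤ x₁, …, ζ(tₙ) ≤ xₙ) = exp( - E[ max_i e^{Z(t_i) - x_i} ] )`. -/
def IsAssocMaxStable {T Ω Ω' : Type*} [MeasurableSpace Ω] [MeasurableSpace Ω']
    (μ' : Measure Ω') (ζ : T → Ω' → ℝ) (μ : Measure Ω) (Z : T → Ω → EReal) : Prop :=
  ∀ (n : ℕ) (t : Fin n → T) (x : Fin n → ℝ),
    μ' {ω | ∀ i, ζ (t i) ω ≤ x i}
      = expNeg (∫⁻ ω, ⨆ i, expE (Z (t i) ω - (x i : EReal)) ∂μ)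

/-- The law of the path `ω ↦ Z(·)(ω)` on the product σ-field. -/
def pathLaw {T Ω : Type*} [MeasurableSpace Ω] (μ : Measure Ω) (Z : T → Ω → EReal) :
    Measure (T → EReal) := Measure.map (fun ω t => Z t ω) μ

/-- Law of the exponentially tilted process `Z^{[h]}`:
`P(Z^{[h]} ∈ A) = E[ e^{Z(h)} 1_{Z ∈ A} ]`.  (When `P(Z(h) = -∞) > 0` this is the law of the
tilt `V_h^{[h]}` of the conditional process `V_h = Z | (Z(h) > -∞)` by
`V_h(h) - ln E[e^{V_h(h)}]`, since the density `e^{f(h)}` vanishes on `{f : f(h) = -∞}`.) -/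
def tiltLaw {T Ω : Type*} [MeasurableSpace Ω] (μ : Measure Ω) (Z : T → Ω → EReal) (h : T) :
    Measure (T → EReal) := (pathLaw μ Z).withDensity fun f => expE (f h)

/-- Law of the recentred tilted process `Θ_h = Ξ_h Z`, `Θ_h(t) = Z^{[h]}(t) - Z^{[h]}(h)`
(equal to `Θ_h(t) = V_h^{[h]}(t) - V_h^{[h]}(h)` in the general case). -/
def ThetaLaw {T Ω : Type*} [MeasurableSpace Ω] (μ : Measure Ω) (Z : T → Ω → EReal) (h : T) :
    Measure (T → EReal) := Measure.map (fun f t => f t - f h) (tiltLaw μ Z h)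

/-- The smallest index attaining the maximum of `g`. -/
def infArgmax {n : ℕ} (g : Fin (n + 1) → EReal) : Fin (n + 1) :=
  (Finset.univ.filter fun i => ∀ j, g j ≤ g i).min' (by
    obtain ⟨i, -, hi⟩ :=
      Finset.exists_max_image (Finset.univ : Finset (Fin (n + 1))) g ⟨0, Finset.mem_univ 0⟩
    exact ⟨i, Finset.mem_filter.mpr ⟨Finset.mem_univ i, fun j => hi j (Finset.mem_univ j)⟩⟩)


/-!
Write `g_i = Z(t_i)` for one sample of `Z`. Only the `k` that attain the maximum of
`g_i - x_i` (with smallest index) contribute to `Σ_k e^{-x_k} P(Θ_{t_k} ∈ A_k)`: untilting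
`Θ_{t_k}` turns that term into `E[e^{g_k - x_k} ; inf argmax_i (g_i - g_k - x_i) = k]`, and
subtracting the finite constant `g_k` does not move the inf-argmax, while `g_k = -∞` gives a
zero term. Summing over `k` therefore yields `E[max_i e^{g_i - x_i}]`, which is `-ln H(x)`.
-/

lemma expE_bot : expE ⊥ = 0 := by simp [expE]

lemma expE_top : expE ⊤ = ⊤ := by simp [expE]

lemma expE_coe (r : ℝ) : expE r = ENNReal.ofReal (Real.exp r) := by
  simp [expE]

@[fun_prop]
lemma measurable_expE : Measurable expE := by
  unfold expE
  refine Measurable.ite (measurableSet_singleton ⊤) measurable_const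
    (Measurable.ite (measurableSet_singleton ⊥) measurable_const ?_)
  exact ENNReal.measurable_ofReal.comp (Real.measurable_exp.comp measurable_ereal_toReal)

lemma monotone_expE : Monotone expE := by
  intro a b hab
  induction b using EReal.rec with
  | bot => rw [le_bot_iff.mp hab]
  | top => simp [expE_top]
  | coe b =>
    induction a using EReal.rec with
    | bot => simp [expE_bot]
    | top => simp at hab
    | coe a =>
      rw [expE_coe, expE_coe]
      exact ENNReal.ofReal_le_ofReal (Real.exp_le_exp.mpr (mod_cast hab))

lemma expE_sub_coe (a : EReal) (x : ℝ) :
    expE (a - x) = ENNReal.ofReal (Real.exp (-x)) * expE a := by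
  induction a using EReal.rec with
  | bot => simp [expE_bot]
  | top => rw [EReal.top_sub_coe, expE_top, ENNReal.mul_top (by simp [Real.exp_pos])]
  | coe a =>
    rw [← EReal.coe_sub, expE_coe, expE_coe, ← ENNReal.ofReal_mul (Real.exp_nonneg _),
      ← Real.exp_add, neg_add_eq_sub]

lemma EReal.sub_coe_le_sub_coe_iff (a b : EReal) (c : ℝ) : a - c ≤ b - c ↔ a ≤ b := by
  simp only [sub_eq_add_neg, ← EReal.coe_neg]
  exact (EReal.addLECancellable_coe (-c)).add_le_add_iff_right

@[fun_prop]
lemma Measurable.ereal_sub {α : Type*} [MeasurableSpace α] {f g : α → EReal}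
    (hf : Measurable f) (hg : Measurable g) : Measurable fun a => f a - g a := by
  simp_rw [sub_eq_add_neg]
  exact hf.add hg.neg

section infArgmax

variable {n : ℕ}

lemma infArgmax_eq_iff (g : Fin (n + 1) → EReal) (k : Fin (n + 1)) :
    infArgmax g = k ↔ (∀ j, g j ≤ g k) ∧ ∀ l, (∀ j, g j ≤ g l) → k ≤ l := by
  unfold infArgmax
  rw [Finset.min'_eq_iff]
  simp

lemma infArgmax_sub_coe (g : Fin (n + 1) → EReal) (c : ℝ) :
    infArgmax (fun i => g i - c) = infArgmax g := by
  simp only [infArgmax, EReal.sub_coe_le_sub_coe_iff]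

@[fun_prop]
lemma measurable_infArgmax : Measurable (infArgmax (n := n)) := by
  refine measurable_to_countable' fun k => ?_
  have hk : infArgmax ⁻¹' {k} =
      {g : Fin (n + 1) → EReal | (∀ j, g j ≤ g k) ∧ ∀ l, (∀ j, g j ≤ g l) → k ≤ l} := by
    ext g
    exact infArgmax_eq_iff g k
  rw [hk, measurableSet_setOfPred]
  fun_prop

lemma sum_ite_infArgmax_eq_iSup (g : Fin (n + 1) → EReal) (hg : ∀ i, g i ≠ ⊤)
    (x : Fin (n + 1) → ℝ) :
    ∑ k, (if infArgmax (fun i => g i - g k - x i) = k then expE (g k - x k) else 0)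
      = ⨆ i, expE (g i - x i) := by
  set K := infArgmax fun i => g i - x i
  have hK : ∀ j, g j - x j ≤ g K - x K := ((infArgmax_eq_iff _ K).mp rfl).1
  have hterm : ∀ k, (if infArgmax (fun i => g i - g k - x i) = k then expE (g k - x k) else 0)
      = if k = K then expE (g k - x k) else 0 := by
    intro k
    by_cases hbot : g k = ⊥
    · simp [hbot, expE_bot]
    · have hshift : (fun i => g i - g k - x i) = fun i => (g i - x i) - (g k).toReal := by
        funext i
        rw [EReal.coe_toReal (hg k) hbot]
        simp only [sub_eq_add_neg]
        exact add_right_comm _ _ _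
      rw [hshift, infArgmax_sub_coe]
      exact if_congr eq_comm rfl rfl
  rw [Finset.sum_congr rfl fun k _ => hterm k, Finset.sum_ite_eq' Finset.univ K]
  simp only [Finset.mem_univ, if_true]
  exact le_antisymm (le_iSup (fun i => expE (g i - x i)) K)
    (iSup_le fun i => monotone_expE (hK i))

end infArgmax

lemma ThetaLaw_apply {T Ω : Type*} [MeasurableSpace Ω] (μ : Measure Ω) {Z : T → Ω → EReal}
    (hZ : ∀ s, Measurable (Z s)) (h : T) {A : Set (T → EReal)} (hA : MeasurableSet A) :
    ThetaLaw μ Z h A = ∫⁻ ω in (fun ω s => Z s ω - Z h ω) ⁻¹' A, expE (Z h ω) ∂μ := by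
  have hpath : Measurable fun ω s => Z s ω := by fun_prop
  have hcentre : Measurable fun (f : T → EReal) s => f s - f h := by fun_prop
  rw [ThetaLaw, tiltLaw, pathLaw, Measure.map_apply hcentre hA,
    withDensity_apply _ (hcentre hA),
    setLIntegral_map (f := fun f => expE (f h)) (hcentre hA) (by fun_prop) hpath]
  rfl

lemma ofReal_exp_neg_mul_ThetaLaw_infArgmax {T Ω : Type*} [MeasurableSpace Ω] (μ : Measure Ω)
    {Z : T → Ω → EReal} (hZ : ∀ s, Measurable (Z s)) {n : ℕ} (t : Fin (n + 1) → T)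
    (x : Fin (n + 1) → ℝ) (k : Fin (n + 1)) :
    ENNReal.ofReal (Real.exp (-x k)) *
        ThetaLaw μ Z (t k) {f | infArgmax (fun i => f (t i) - x i) = k}
      = ∫⁻ ω, (if infArgmax (fun i => Z (t i) ω - Z (t k) ω - x i) = k
          then expE (Z (t k) ω - x k) else 0) ∂μ := by
  have hA : MeasurableSet {f : T → EReal | infArgmax (fun i => f (t i) - x i) = k} :=
    measurableSet_eq_fun (by fun_prop) measurable_const
  have hcentre : Measurable fun ω s => Z s ω - Z (t k) ω := by fun_prop
  rw [ThetaLaw_apply μ hZ (t k) hA, ← lintegral_const_mul _ (by fun_prop),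
    ← lintegral_indicator (hcentre hA)]
  congr 1
  funext ω
  classical
  rw [expE_sub_coe, Set.indicator_apply]
  congr

theorem statement_8_general {T Ω Ω' : Type*} [MeasurableSpace Ω] [MeasurableSpace Ω']
    (μ : Measure Ω) (μ' : Measure Ω')
    (Z : T → Ω → EReal) (hZm : ∀ t, Measurable (Z t))
    (hZne : ∀ t, ∀ᵐ ω ∂μ, Z t ω ≠ ⊤)
    (ζ : T → Ω' → ℝ) (hζ : IsAssocMaxStable μ' ζ μ Z)
    (n : ℕ) (t : Fin (n + 1) → T) (x : Fin (n + 1) → ℝ) :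
    μ' {ω | ∀ i, ζ (t i) ω ≤ x i}
      = expNeg (∑ k, ENNReal.ofReal (Real.exp (-(x k))) *
          ThetaLaw μ Z (t k) {f | infArgmax (fun i => f (t i) - (x i : EReal)) = k}) := by
  rw [hζ (n + 1) t x]
  congr 1
  simp_rw [ofReal_exp_neg_mul_ThetaLaw_infArgmax μ hZm t x]
  rw [← lintegral_finsetSum _ fun k _ => Measurable.ite
    (measurableSet_eq_fun (by fun_prop) measurable_const) (by fun_prop) measurable_const]
  refine lintegral_congr_ae ?_
  filter_upwards [ae_all_iff.mpr fun i => hZne (t i)] with ω hω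
  exact (sum_ite_infArgmax_eq_iSup (fun i => Z (t i) ω) hω x).symm

/-- Theorem 6: inf-argmax representation.
For distinct `t₁, …, tₙ₊₁` the d.f. `H` of `(ζ_Z(t₁), …, ζ_Z(tₙ₊₁))` satisfies
`-ln H(x) = Σ_k e^{-x_k} P( inf argmax_i (Θ_{t_k}(t_i) - x_i) = k )`. -/
theorem statement_8 {T Ω Ω' : Type*} [MeasurableSpace Ω] [MeasurableSpace Ω']
    (μ : Measure Ω) (μ' : Measure Ω') [IsProbabilityMeasure μ] [IsProbabilityMeasure μ']
    (Z : T → Ω → EReal) (hZm : ∀ t, Measurable (Z t))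
    (hZne : ∀ t, ∀ᵐ ω ∂μ, Z t ω ≠ ⊤)
    (hZexp : ∀ t, ∫⁻ ω, expE (Z t ω) ∂μ = 1)
    (ζ : T → Ω' → ℝ) (hζ : IsAssocMaxStable μ' ζ μ Z)
    (n : ℕ) (t : Fin (n + 1) → T) (ht : Function.Injective t) (x : Fin (n + 1) → ℝ) :
    μ' {ω | ∀ i, ζ (t i) ω ≤ x i}
      = expNeg (∑ k, ENNReal.ofReal (Real.exp (-(x k))) *
          ThetaLaw μ Z (t k) {f | infArgmax (fun i => f (t i) - (x i : EReal)) = k}) :=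
  statement_8_general μ μ' Z hZm hZne ζ hζ n t x

end
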